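/- arXiv:math/0001010 — 7 statements merged into one kernel-verified Lean document; each statement's English description precedes it below -/
import Mathlib

section
/- If a finite system of homogeneous linear equations with integer coefficients has a solution in which every coordinate is a positive real number, then it has a solution in which every coordinate is a positive integer. -/
/-!
The coefficients are rational and ℝ is flat over ℚ, so the real solution space of the system is
the real span of its rational solutions; hence rational solutions are dense among the real ones.
The open positive orthant then contains a rational solution as soon as it contains a real one,
and multiplying that solution by a common denominator gives a positive integer solution.
-/

open Matrix TensorProduct

theorem Matrix.mem_span_algebraMap_comp_of_mulVec_eq_zero {R S ι κ : Type*} [CommRing R]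
    [CommRing S] [Algebra R S] [Module.Flat R S] [Fintype ι] [Fintype κ]
    (M : Matrix κ ι R) {x : ι → S} (hx : M.map (algebraMap R S) *ᵥ x = 0) :
    x ∈ Submodule.span S ((algebraMap R S ∘ ·) '' {u | M *ᵥ u = 0}) := by
  classical
  set e := piScalarRight R S S ι
  have hcompat : (piScalarRight R S S κ).toLinearMap ∘ₗ
      AlgebraTensorModule.lTensor S S M.mulVecLin =
      (M.map (algebraMap R S)).mulVecLin ∘ₗ e.toLinearMap := by
    ext u i
    simp [e, mulVec, dotProduct, Algebra.smul_def, piScalarRight_apply, Pi.single_apply]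
  have hker : e.symm x ∈ LinearMap.ker (AlgebraTensorModule.lTensor S S M.mulVecLin) := by
    refine (piScalarRight R S S κ).map_eq_zero_iff.mp ?_
    simpa [hx] using congr($hcompat (e.symm x))
  rw [Module.Flat.ker_lTensor_eq] at hker
  obtain ⟨t, ht⟩ := hker
  rw [← e.apply_symm_apply x, ← ht]
  clear ht
  induction t using TensorProduct.induction_on with
  | zero => simp
  | tmul s u =>
    have hpure :
        e (AlgebraTensorModule.lTensor S S (LinearMap.ker M.mulVecLin).subtype (s ⊗ₜ u)) =
          s • (algebraMap R S ∘ u) := by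
      ext i
      simp [e, piScalarRight_apply, Algebra.smul_def, mul_comm]
    rw [hpure]
    exact Submodule.smul_mem _ _ (Submodule.subset_span ⟨u, u.2, rfl⟩)
  | add t₁ t₂ h₁ h₂ => simpa only [map_add] using Submodule.add_mem _ h₁ h₂

theorem Matrix.exists_rat_mulVec_eq_zero_mem_of_isOpen {ι κ : Type*} [Fintype ι] [Fintype κ]
    (M : Matrix κ ι ℚ) {x : ι → ℝ} (hx : M.map (↑) *ᵥ x = 0)
    {U : Set (ι → ℝ)} (hU : IsOpen U) (hxU : x ∈ U) :
    ∃ z : ι → ℚ, M *ᵥ z = 0 ∧ ((↑) : ℚ → ℝ) ∘ z ∈ U := by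
  obtain ⟨n, a, w, rfl⟩ :=
    Submodule.mem_span_set'.mp (M.mem_span_algebraMap_comp_of_mulVec_eq_zero hx)
  choose u hu hw using fun j => (w j).2
  simp only [Set.mem_ofPred_eq] at hu
  set φ : (Fin n → ℝ) → ι → ℝ := fun b => ∑ j, b j • (w j : ι → ℝ)
  have hφ : Continuous φ := by fun_prop
  obtain ⟨q, hq⟩ := (DenseRange.piMap fun _ => Rat.denseRange_cast).exists_mem_open
    (hU.preimage hφ) ⟨a, hxU⟩
  refine ⟨∑ j, q j • u j, ?_, ?_⟩
  · simp [mulVec_sum, mulVec_smul, hu]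
  · rw [Set.mem_preimage] at hq
    convert hq using 1
    ext i
    simp [φ, ← hw]

theorem Rat.exists_nat_mul_eq_intCast {ι : Type*} [Fintype ι] (z : ι → ℚ) :
    ∃ d : ℕ, 0 < d ∧ ∃ y : ι → ℤ, ∀ k, (y k : ℚ) = d * z k := by
  refine ⟨∏ k, (z k).den, Finset.prod_pos fun k _ => (z k).pos, ?_⟩
  have hdvd k : (z k).den ∣ ∏ k, (z k).den := Finset.dvd_prod_of_mem _ (Finset.mem_univ k)
  choose e he using hdvd
  refine ⟨fun k => (z k).num * e k, fun k => ?_⟩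
  push_cast [he k]
  rw [← Rat.mul_den_eq_num]
  ring

/-- If a finite system of homogeneous linear equations with integer coefficients
has a solution with all coordinates positive reals, then it has a solution with
all coordinates positive integers. -/
theorem stmt0 {m r : ℕ} (c : Fin m → Fin r → ℤ)
    (h : ∃ x : Fin r → ℝ, (∀ i, ∑ k, (c i k : ℝ) * x k = 0) ∧ ∀ k, 0 < x k) :
    ∃ y : Fin r → ℤ, (∀ i, ∑ k, c i k * y k = 0) ∧ ∀ k, 0 < y k := by
  obtain ⟨x, hx, hxpos⟩ := h
  let M : Matrix (Fin m) (Fin r) ℚ := Matrix.of fun i k => (c i k : ℚ)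
  obtain ⟨z, hz, hzpos⟩ := M.exists_rat_mulVec_eq_zero_mem_of_isOpen (x := x)
    (funext fun i => by simpa [M, mulVec, dotProduct] using hx i)
    (isOpen_set_pi Set.finite_univ fun _ _ => isOpen_Ioi) (fun k _ => hxpos k)
  obtain ⟨d, hd, y, hy⟩ := Rat.exists_nat_mul_eq_intCast z
  refine ⟨y, fun i => ?_, fun k => ?_⟩
  · have hyz : ((∑ k, c i k * y k : ℤ) : ℚ) = d * (M *ᵥ z) i := by
      simp only [M, mulVec, dotProduct, Matrix.of_apply, Finset.mul_sum]
      push_cast [hy]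
      exact Finset.sum_congr rfl fun k _ => by ring
    rw [hz, Pi.zero_apply, mul_zero] at hyz
    exact_mod_cast hyz
  · have hzk : (0 : ℝ) < z k := hzpos k trivial
    have hyk : (0 : ℚ) < y k := (hy k).symm ▸ mul_pos (Nat.cast_pos.mpr hd) (mod_cast hzk)
    exact_mod_cast hyk
end

section
/- If two elements x and y of a free group commute, then there exist an element z and integers a, b such that x = z^a and y = z^b. -/
theorem aux_of_comm {α : Type*} (a b : α)
    (h : FreeGroup.of a * FreeGroup.of b = FreeGroup.of b * FreeGroup.of a) : a = b := by
  classical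
  have key : ∀ u v : α, (FreeGroup.of u * FreeGroup.of v).toWord = [(u,true),(v,true)] := by
    intro u v
    have : FreeGroup.of u * FreeGroup.of v = FreeGroup.mk ([(u,true)] ++ [(v,true)]) := by
      show FreeGroup.mk [(u,true)] * FreeGroup.mk [(v,true)] = _
      rw [FreeGroup.mul_mk]
    rw [this, FreeGroup.toWord_mk]
    simp [FreeGroup.reduce]
  have h1 := key a b
  rw [h, key b a] at h1
  exact ((Prod.mk.injEq _ _ _ _ ▸ (List.cons_eq_cons.mp h1).1).1).symm

theorem aux_pow {ι : Type*} [Subsingleton ι] (i0 : ι) (w : FreeGroup ι) :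
    ∃ n : ℤ, w = FreeGroup.of i0 ^ n := by
  refine FreeGroup.induction_on (C := fun w => ∃ n : ℤ, w = FreeGroup.of i0 ^ n) w
    ⟨0, by simp⟩ (fun x => ⟨1, by rw [Subsingleton.elim x i0, zpow_one]⟩) ?_ ?_
  · rintro x ⟨n, hn⟩
    exact ⟨-n, by rw [hn, ← zpow_neg]⟩
  · rintro u v ⟨m, hm⟩ ⟨n, hn⟩
    exact ⟨m + n, by rw [hm, hn, zpow_add]⟩

/-- If two elements of a free group commute then both are powers of a common element. -/
theorem stmt2 {α : Type*} (x y : FreeGroup α) (h : x * y = y * x) :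
    ∃ (z : FreeGroup α) (a b : ℤ), x = z ^ a ∧ y = z ^ b := by
  classical
  set H := Subgroup.closure ({x, y} : Set (FreeGroup α)) with hH
  have hxH : x ∈ H := Subgroup.subset_closure (by simp)
  have hyH : y ∈ H := Subgroup.subset_closure (by simp)
  have habH : ∀ a b : H, a * b = b * a := by
    rintro ⟨a, ha⟩ ⟨b, hb⟩
    have : a * b = b * a := by
      refine Subgroup.closure_induction₂ (k := ({x, y} : Set (FreeGroup α)))
        (p := fun u v _ _ => u * v = v * u) ?_ (by simp) (by simp) ?_ ?_ ?_ ?_ ha hb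
      · rintro u v (rfl | rfl) (rfl | rfl)
        exacts [rfl, h, h.symm, rfl]
      · intro u v w _ _ _ h1 h2
        exact Commute.mul_left h1 h2
      · intro u v w _ _ _ h1 h2
        exact Commute.mul_right h1 h2
      · intro u v _ _ h1
        exact Commute.inv_left h1
      · intro u v _ _ h1
        exact Commute.inv_right h1
    exact Subtype.ext this
  obtain ⟨ι, ⟨basis⟩⟩ := (inferInstance : IsFreeGroup H).nonempty_basis
  set e : H ≃* FreeGroup ι := basis.repr
  have hsub : Subsingleton ι := by
    constructor
    intro a b
    apply aux_of_comm
    have := habH (e.symm (FreeGroup.of a)) (e.symm (FreeGroup.of b))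
    apply_fun e at this
    simpa using this
  rcases isEmpty_or_nonempty ι with hι | hι
  · have key : ∀ (w : FreeGroup α) (hw : w ∈ H), w = 1 := by
      intro w hw
      have : e ⟨w, hw⟩ = e 1 := Subsingleton.elim _ _
      have := e.injective this
      simpa using congrArg Subtype.val this
    exact ⟨1, 0, 0, by simpa using key x hxH, by simpa using key y hyH⟩
  · obtain ⟨i0⟩ := hι
    obtain ⟨a, ha⟩ := aux_pow i0 (e ⟨x, hxH⟩)
    obtain ⟨b, hb⟩ := aux_pow i0 (e ⟨y, hyH⟩)
    refine ⟨(e.symm (FreeGroup.of i0) : H), a, b, ?_, ?_⟩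
    · have h2 : (⟨x, hxH⟩ : H) = e.symm (FreeGroup.of i0) ^ a := by
        apply e.injective; rw [ha]; simp
      have := congrArg Subtype.val h2
      simpa using this
    · have h2 : (⟨y, hyH⟩ : H) = e.symm (FreeGroup.of i0) ^ b := by
        apply e.injective; rw [hb]; simp
      have := congrArg Subtype.val h2
      simpa using this
end

section
/- Let P be a finite nonempty subset of a free group F on generators f_1, …, f_m. Then the total number of pairs (i, p) with 1 ≤ i ≤ m, p ∈ P, and f_i * p ∈ P is strictly less than the cardinality of P. -/
open FreeGroup

private lemma key5 {α : Type*} [DecidableEq α] (i : α) (b : Bool) (x : FreeGroup α) :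
    (FreeGroup.mk [(i,b)] * x).toWord = (i,b) :: x.toWord ∨
    ∃ t, x.toWord = (i,!b) :: t ∧ (FreeGroup.mk [(i,b)] * x).toWord = t := by
  have hx : FreeGroup.mk [(i,b)] * x = FreeGroup.mk ((i,b) :: x.toWord) := by
    conv_lhs => rw [← FreeGroup.mk_toWord (x := x)]
    rw [FreeGroup.mul_mk]
    rfl
  rw [hx, FreeGroup.toWord_mk, FreeGroup.reduce.cons, FreeGroup.reduce_toWord]
  cases h : x.toWord with
  | nil => left; simp
  | cons a t =>
    obtain ⟨a1, a2⟩ := a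
    by_cases hc : i = a1 ∧ b = !a2
    · right
      refine ⟨t, ?_, ?_⟩
      · simp [hc.1, hc.2]
      · simp [hc]
    · left
      simp [hc, h]

private lemma head5 {α : Type*} [DecidableEq α] {i : α} {b : Bool} {x : FreeGroup α}
    (h : (FreeGroup.mk [(i,b)] * x).toWord.length ≤ x.toWord.length) :
    ∃ t, x.toWord = (i,!b) :: t := by
  rcases key5 i b x with hk | ⟨t, ht, _⟩
  · rw [hk] at h; simp at h
  · exact ⟨t, ht⟩

private lemma of_eq_mk {α : Type*} (i : α) : FreeGroup.of i = FreeGroup.mk [(i, true)] := rfl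

private lemma of_inv_eq_mk {α : Type*} (i : α) :
    (FreeGroup.of i)⁻¹ = FreeGroup.mk [(i, false)] := by
  rw [of_eq_mk, FreeGroup.inv_mk]; rfl

private lemma main5 {m : ℕ} : ∀ Q : Finset (FreeGroup (Fin m)), Q.Nonempty →
    ∑ i : Fin m, (Q.filter (fun p => FreeGroup.of i * p ∈ Q)).card < Q.card := by
  intro Q
  induction Q using Finset.strongInduction with
  | _ Q IH =>
  intro hne
  obtain ⟨p, hp, hmax⟩ := Finset.exists_max_image Q (fun x => x.toWord.length) hne
  by_cases hQ' : (Q.erase p).Nonempty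
  · -- at most one pair involves p
    have hlen1 : p.toWord ≠ [] ∨ ∀ q ∈ Q, q = p := by
      by_cases hnil : p.toWord = []
      · right
        intro q hq
        have := hmax q hq
        rw [hnil] at this
        simp only [List.length_nil, Nat.le_zero, List.length_eq_zero_iff] at this
        rw [← FreeGroup.toWord_inj, this, hnil]
      · left; exact hnil
    rcases hlen1 with hnil | hall
    · -- p has a first letter (j, b)
      obtain ⟨⟨j, b⟩, t, hpt⟩ := List.exists_cons_of_ne_nil hnil
      -- the lost set
      have hsub : ∀ i : Fin m,
          Q.filter (fun q => FreeGroup.of i * q ∈ Q) ⊆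
            (Q.erase p).filter (fun q => FreeGroup.of i * q ∈ Q.erase p) ∪
              (if i = j then {if b then (FreeGroup.of j)⁻¹ * p else p} else ∅) := by
        intro i q hq
        simp only [Finset.mem_filter] at hq
        obtain ⟨hqQ, hiq⟩ := hq
        by_cases h1 : q = p
        · -- q = p: then of i * p ∈ Q, so head p = (i, false), so b = false, i = j
          subst h1
          have hle : (FreeGroup.mk [(i, true)] * q).toWord.length ≤ q.toWord.length := by
            rw [← of_eq_mk]; exact hmax _ hiq
          obtain ⟨t', ht'⟩ := head5 hle
          rw [hpt] at ht'
          have hij : i = j ∧ b = false := by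
            have := List.head_eq_of_cons_eq ht'.symm
            simp only [Prod.mk.injEq] at this
            exact ⟨this.1, by simpa using this.2⟩
          rw [Finset.mem_union, if_pos hij.1, hij.2]
          right; simp
        · by_cases h2 : FreeGroup.of i * q = p
          · -- of i * q = p: q = (of i)⁻¹ p, head p = (i, true)
            have hq' : q = (FreeGroup.of i)⁻¹ * p := by
              rw [← h2]; group
            have hle : (FreeGroup.mk [(i, false)] * p).toWord.length ≤ p.toWord.length := by
              rw [← of_inv_eq_mk, ← hq']; exact hmax _ hqQ
            obtain ⟨t', ht'⟩ := head5 hle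
            rw [hpt] at ht'
            have hij : i = j ∧ b = true := by
              have := List.head_eq_of_cons_eq ht'.symm
              simp only [Prod.mk.injEq] at this
              exact ⟨this.1, by simpa using this.2⟩
            rw [Finset.mem_union, if_pos hij.1, hij.2]
            right
            simp only [if_true, Finset.mem_singleton]
            rw [hq', hij.1]
          · rw [Finset.mem_union]
            left
            simp only [Finset.mem_filter, Finset.mem_erase]
            exact ⟨⟨h1, hqQ⟩, h2, hiq⟩
      have hcard : ∀ i : Fin m,
          (Q.filter (fun q => FreeGroup.of i * q ∈ Q)).card ≤
            ((Q.erase p).filter (fun q => FreeGroup.of i * q ∈ Q.erase p)).card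
              + (if i = j then 1 else 0) := by
        intro i
        calc (Q.filter (fun q => FreeGroup.of i * q ∈ Q)).card
            ≤ ((Q.erase p).filter (fun q => FreeGroup.of i * q ∈ Q.erase p) ∪
              (if i = j then {if b then (FreeGroup.of j)⁻¹ * p else p} else ∅)).card :=
              Finset.card_le_card (hsub i)
          _ ≤ _ := by
              refine (Finset.card_union_le _ _).trans ?_
              gcongr
              split <;> simp
      have hIH := IH (Q.erase p) (Finset.erase_ssubset hp) hQ'
      calc ∑ i : Fin m, (Q.filter (fun p => FreeGroup.of i * p ∈ Q)).card
          ≤ ∑ i : Fin m, (((Q.erase p).filter (fun q => FreeGroup.of i * q ∈ Q.erase p)).card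
              + (if i = j then 1 else 0)) := Finset.sum_le_sum fun i _ => hcard i
        _ = (∑ i : Fin m, ((Q.erase p).filter (fun q => FreeGroup.of i * q ∈ Q.erase p)).card)
              + 1 := by rw [Finset.sum_add_distrib, Finset.sum_ite_eq' Finset.univ j]; simp
        _ < (Q.erase p).card + 1 := by omega
        _ = Q.card := by rw [Finset.card_erase_add_one hp]
    ·
      have hQp : Q = {p} := by
        apply Finset.eq_singleton_iff_unique_mem.2 ⟨hp, hall⟩
      exfalso
      obtain ⟨q, hq⟩ := hQ'
      rw [Finset.mem_erase] at hq
      exact hq.1 (hall q hq.2)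
  · -- Q.erase p empty: Q = {p}
    have hQp : Q = {p} := by
      apply Finset.eq_singleton_iff_unique_mem.2 ⟨hp, fun q hq => ?_⟩
      by_contra h
      exact hQ' ⟨q, Finset.mem_erase.2 ⟨h, hq⟩⟩
    subst hQp
    have : ∀ i : Fin m, Finset.filter (fun q => FreeGroup.of i * q ∈ ({p} : Finset _)) {p} = ∅ := by
      intro i
      simp only [Finset.filter_eq_empty_iff, Finset.mem_singleton]
      rintro q rfl
      intro h
      have : FreeGroup.of i * q = 1 * q := by rw [h, one_mul]
      exact FreeGroup.of_ne_one i (mul_right_cancel this)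
    simp only [this, Finset.card_empty, Finset.sum_const_zero, Finset.card_singleton]
    omega

/-- For a finite nonempty subset `P` of the free group on `m` generators, the total
number of pairs `(i, p)` with `p ∈ P` and `f i * p ∈ P` is strictly less than `|P|`. -/
theorem stmt5 {m : ℕ} (P : Set (FreeGroup (Fin m))) (hfin : P.Finite) (hne : P.Nonempty) :
    ∑ i : Fin m, {p ∈ P | FreeGroup.of i * p ∈ P}.ncard < P.ncard := by
  classical
  set Q : Finset (FreeGroup (Fin m)) := hfin.toFinset with hQ
  have hQP : (Q : Set (FreeGroup (Fin m))) = P := hfin.coe_toFinset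
  have h1 : P.ncard = Q.card := by rw [← hQP, Set.ncard_coe_finset]
  have h2 : ∀ i : Fin m, {p ∈ P | FreeGroup.of i * p ∈ P}.ncard
      = (Q.filter (fun p => FreeGroup.of i * p ∈ Q)).card := by
    intro i
    rw [← Set.ncard_coe_finset]
    congr 1
    ext x
    simp [← hQP]
  rw [h1]
  calc ∑ i : Fin m, {p ∈ P | FreeGroup.of i * p ∈ P}.ncard
      = ∑ i : Fin m, (Q.filter (fun p => FreeGroup.of i * p ∈ Q)).card :=
        Finset.sum_congr rfl fun i _ => h2 i
    _ < Q.card := main5 Q (by rw [← Finset.coe_nonempty, hQP]; exact hne)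
end

section
/- Let G be a group, let ρ and σ be commuting elements of G, and let A₁, A₂, A₃ be pairwise disjoint finite subsets of G with ρ • A₁ = A₃ and σ • (A₁ ∪ A₃) = A₁ ∪ A₂. Then σ • A₃ = A₁ and σ • A₁ = A₂. -/
open Pointwise

/-- If `ρ` and `σ` commute and disjoint finite sets satisfy `ρ • A₁ = A₃` and
`σ • (A₁ ∪ A₃) = A₁ ∪ A₂`, then `σ • A₃ = A₁` and `σ • A₁ = A₂`. -/
theorem stmt7 {G : Type*} [Group G] (ρ σ : G) (hcomm : ρ * σ = σ * ρ)
    (A₁ A₂ A₃ : Set G) (h1 : A₁.Finite) (h2 : A₂.Finite) (h3 : A₃.Finite)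
    (d12 : Disjoint A₁ A₂) (d13 : Disjoint A₁ A₃) (d23 : Disjoint A₂ A₃)
    (hρ : ρ • A₁ = A₃) (hσ : σ • (A₁ ∪ A₃) = A₁ ∪ A₂) :
    σ • A₃ = A₁ ∧ σ • A₁ = A₂ := by
  rw [Set.smul_set_union] at hσ
  -- σ • A₃ ⊆ A₁ ∪ A₂, so disjoint from A₃
  have hs3 : σ • A₃ ⊆ A₁ ∪ A₂ := by
    rw [← hσ]; exact Set.subset_union_right
  have hd33 : Disjoint (σ • A₃) A₃ :=
    Set.disjoint_of_subset_left hs3 (Set.disjoint_union_left.mpr ⟨d13, d23⟩)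
  -- σ • A₁ disjoint from A₁
  have key : σ • A₁ = ρ⁻¹ • σ • A₃ := by
    rw [← hρ, smul_smul, smul_smul, mul_assoc, ← hcomm, ← mul_assoc, inv_mul_cancel, one_mul]
  have hd11 : Disjoint (σ • A₁) A₁ := by
    rw [key, show A₁ = ρ⁻¹ • A₃ by rw [← hρ, inv_smul_smul]]
    exact Set.disjoint_smul_set.mpr hd33
  have hs1 : σ • A₁ ⊆ A₁ ∪ A₂ := by
    rw [← hσ]; exact Set.subset_union_left
  have hs1' : σ • A₁ ⊆ A₂ := fun x hx => by
    rcases hs1 hx with h | h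
    · exact absurd h (Set.disjoint_left.mp hd11 hx)
    · exact h
  -- A₁ ⊆ σ • A₃
  have hsub : A₁ ⊆ σ • A₃ := fun x hx => by
    have : x ∈ σ • A₁ ∪ σ • A₃ := hσ ▸ Set.mem_union_left _ hx
    rcases this with h | h
    · exact absurd h (Set.disjoint_right.mp hd11 hx)
    · exact h
  have hcard : (σ • A₃).ncard ≤ A₁.ncard := by
    rw [Set.ncard_smul_set, ← hρ, Set.ncard_smul_set]
  have h31 : σ • A₃ = A₁ :=
    (Set.eq_of_subset_of_ncard_le hsub hcard (h3.smul_set)).symm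
  refine ⟨h31, hs1'.antisymm fun x hx => ?_⟩
  have : x ∈ σ • A₁ ∪ σ • A₃ := hσ ▸ Set.mem_union_right _ hx
  rcases this with h | h
  · exact h
  · exact absurd (h31 ▸ h) (Set.disjoint_right.mp d12 hx)
end

section
/- Let F be a free group and let ρ, σ ∈ F with ρ * σ ≠ σ * ρ. If A₁, A₂, A₃ are pairwise disjoint finite subsets of F with ρ • A₁ = A₃ and σ • (A₁ ∪ A₃) = A₁ ∪ A₂, then A₁ = A₂ = A₃ = ∅. -/
/-!
Every point of the finite set `B = A₁ ∪ A₂ ∪ A₃` is sent back into `B` by `ρ⁻¹` (points of `A₃`)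
or by `σ⁻¹` (the others). Iterating inside `B` therefore yields a point fixed by a nonempty
positive word in `ρ⁻¹, σ⁻¹`, so `1` lies in the subsemigroup they generate. In a free group this
is impossible for non-commuting elements: by Nielsen–Schreier they generate a free group, whose
basis has at least two elements since it is not cyclic. The images of the two generators then span
its abelianisation `ℤ^(basis)`, hence are linearly independent, while a positive word has a nonzero
exponent vector.
-/

open Pointwise

theorem Finsupp.linearIndependent_pair_of_single_mem_span {R γ : Type*} [CommRing R]
    [Nontrivial γ] {u v : γ →₀ R} (hspan : ∀ c, single c 1 ∈ Submodule.span R {u, v}) :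
    LinearIndependent R ![u, v] := by
  obtain ⟨c, d, hcd⟩ := exists_pair_ne γ
  obtain ⟨a₁, b₁, h₁⟩ := Submodule.mem_span_pair.mp (hspan c)
  obtain ⟨a₂, b₂, h₂⟩ := Submodule.mem_span_pair.mp (hspan d)
  have e₁ := DFunLike.congr_fun h₁ c
  have e₂ := DFunLike.congr_fun h₁ d
  have e₃ := DFunLike.congr_fun h₂ c
  have e₄ := DFunLike.congr_fun h₂ d
  simp only [add_apply, smul_apply, smul_eq_mul, single_eq_same, single_eq_of_ne hcd,
    single_eq_of_ne hcd.symm] at e₁ e₂ e₃ e₄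
  -- `(aᵢ bᵢ)` is a left inverse of the matrix of coordinates of `u, v` at `c, d`
  have hdet : (a₁ * b₂ - b₁ * a₂) * (u c * v d - u d * v c) = 1 := by
    linear_combination (a₂ * u d + b₂ * v d) * e₁ + e₄ - (a₂ * u c + b₂ * v c) * e₂
  rw [LinearIndependent.pair_iff]
  intro s t hst
  have f₁ := DFunLike.congr_fun hst c
  have f₂ := DFunLike.congr_fun hst d
  simp only [add_apply, smul_apply, smul_eq_mul, coe_zero, Pi.zero_apply] at f₁ f₂
  constructor
  · linear_combination -s * hdet + (a₁ * b₂ - b₁ * a₂) * (v d * f₁ - v c * f₂)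
  · linear_combination -t * hdet + (a₁ * b₂ - b₁ * a₂) * (u c * f₂ - u d * f₁)

theorem FreeGroup.isCyclic_of_subsingleton {γ : Type*} [Subsingleton γ] :
    IsCyclic (FreeGroup γ) := by
  cases isEmpty_or_nonempty γ
  · exact _root_.isCyclic_of_subsingleton
  · have := uniqueOfSubsingleton (Classical.arbitrary γ)
    infer_instance

theorem Set.Finite.exists_smul_eq_self {M X : Type*} [Monoid M] [MulAction M X] {S : Set M}
    {s : Set X} (hs : s.Finite) (hne : s.Nonempty) (h : ∀ x ∈ s, ∃ g ∈ S, g • x ∈ s) :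
    ∃ x ∈ s, ∃ g ∈ Subsemigroup.closure S, g • x = x := by
  choose g hgS hgs using h
  let F : s → s := fun x ↦ ⟨g x x.2 • x, hgs x x.2⟩
  have hF : ∀ n (y : s), ∃ g ∈ Subsemigroup.closure S, (F^[n + 1] y : X) = g • y := by
    intro n y
    induction n with
    | zero => exact ⟨g y y.2, Subsemigroup.subset_closure (hgS y y.2), rfl⟩
    | succ n ih =>
      obtain ⟨g', hg', hy⟩ := ih
      refine ⟨g _ (F^[n + 1] y).2 * g', Subsemigroup.mul_mem _
        (Subsemigroup.subset_closure (hgS _ _)) hg', ?_⟩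
      rw [Function.iterate_succ_apply', mul_smul, ← hy]
  have := hs.to_subtype
  obtain ⟨x₀, hx₀⟩ := hne
  obtain ⟨k, l, hkl, hkl'⟩ := Finite.exists_ne_map_eq_of_infinite fun n ↦ F^[n] ⟨x₀, hx₀⟩
  wlog hlt : k < l generalizing k l
  · exact this l k hkl.symm hkl'.symm (hkl.lt_or_gt.resolve_left hlt)
  obtain ⟨g', hg', hy⟩ := hF (l - k - 1) (F^[k] ⟨x₀, hx₀⟩)
  refine ⟨_, (F^[k] ⟨x₀, hx₀⟩).2, g', hg', ?_⟩
  rw [← hy, ← Function.iterate_add_apply, show l - k - 1 + 1 + k = l by omega, ← hkl']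

section Abelianize

variable {K M : Type*} [Group K] [AddCommGroup M] (ψ : K →* Multiplicative M) {a b x : K}

theorem MonoidHom.toAdd_mem_span_pair_of_mem_closure (hx : x ∈ Subgroup.closure {a, b}) :
    (ψ x).toAdd ∈ Submodule.span ℤ {(ψ a).toAdd, (ψ b).toAdd} := by
  induction hx using Subgroup.closure_induction with
  | mem y hy =>
    rcases hy with rfl | rfl
    exacts [Submodule.subset_span (by simp), Submodule.subset_span (by simp)]
  | one => simp
  | mul y z _ _ hy hz => simpa using Submodule.add_mem _ hy hz
  | inv y _ hy => simpa using Submodule.neg_mem _ hy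

theorem MonoidHom.exists_toAdd_eq_nsmul_add_nsmul_of_mem_closure
    (hx : x ∈ Subsemigroup.closure {a, b}) :
    ∃ m n : ℕ, m + n ≠ 0 ∧ (ψ x).toAdd = m • (ψ a).toAdd + n • (ψ b).toAdd := by
  induction hx using Subsemigroup.closure_induction with
  | mem y hy =>
    rcases hy with rfl | rfl
    exacts [⟨1, 0, by simp⟩, ⟨0, 1, by simp⟩]
  | mul y z _ _ hy hz =>
    obtain ⟨m, n, hmn, hy⟩ := hy
    obtain ⟨m', n', -, hz⟩ := hz
    refine ⟨m + m', n + n', by omega, ?_⟩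
    rw [map_mul, toAdd_mul, hy, hz]
    module

end Abelianize

namespace IsFreeGroup

variable {G : Type*} [Group G] [IsFreeGroup G] {ρ σ : G}

theorem one_notMem_subsemigroupClosure_of_closure_eq_top (h : ¬Commute ρ σ)
    (hgen : Subgroup.closure {ρ, σ} = ⊤) : (1 : G) ∉ Subsemigroup.closure {ρ, σ} := by
  let e := toFreeGroup G
  let ψ : G →* Multiplicative (Generators G →₀ ℤ) :=
    (FreeGroup.lift fun c ↦ .ofAdd (Finsupp.single c 1)).comp e.toMonoidHom
  have : Nontrivial (Generators G) := by
    rw [← not_subsingleton_iff_nontrivial]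
    intro
    have := FreeGroup.isCyclic_of_subsingleton (γ := Generators G)
    exact h (e.injective (by simp only [map_mul, mul_comm' (e ρ)]))
  have hli : LinearIndependent ℤ ![(ψ ρ).toAdd, (ψ σ).toAdd] :=
    Finsupp.linearIndependent_pair_of_single_mem_span fun c ↦ by
      have hc : ψ (e.symm (.of c)) = .ofAdd (Finsupp.single c 1) := by simp [ψ]
      rw [← toAdd_ofAdd (Finsupp.single c 1), ← hc]
      exact ψ.toAdd_mem_span_pair_of_mem_closure (hgen ▸ Subgroup.mem_top _)
  intro h1
  obtain ⟨m, n, hmn, h0⟩ := ψ.exists_toAdd_eq_nsmul_add_nsmul_of_mem_closure h1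
  have := LinearIndependent.pair_iff.mp hli m n (by simpa using h0.symm)
  omega

theorem one_notMem_subsemigroupClosure_pair (h : ¬Commute ρ σ) :
    (1 : G) ∉ Subsemigroup.closure {ρ, σ} := by
  let H := Subgroup.closure {ρ, σ}
  let ρ' : H := ⟨ρ, Subgroup.subset_closure (by simp)⟩
  let σ' : H := ⟨σ, Subgroup.subset_closure (by simp)⟩
  have hgen : Subgroup.closure {ρ', σ'} = ⊤ := by
    rw [← Subgroup.closure_closure_coe_preimage]
    congr
    ext
    simp [ρ', σ', Subtype.ext_iff]
  have hmap : Subsemigroup.closure {ρ, σ} ≤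
      (Subsemigroup.closure {ρ', σ'}).map (H.subtype : H →ₙ* G) := by
    rw [Subsemigroup.closure_le]
    rintro _ (rfl | rfl)
    exacts [⟨ρ', Subsemigroup.subset_closure (by simp), rfl⟩,
      ⟨σ', Subsemigroup.subset_closure (by simp), rfl⟩]
  intro h1
  obtain ⟨y, hy, hy1⟩ := hmap h1
  obtain rfl : y = 1 := Subtype.ext hy1
  -- `H` is free by Nielsen–Schreier (`subgroupIsFreeOfIsFree`)
  exact one_notMem_subsemigroupClosure_of_closure_eq_top
    (fun hc : Commute ρ' σ' ↦ h (congrArg Subtype.val hc.eq)) hgen hy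

end IsFreeGroup

theorem stmt8_general {α : Type*} (ρ σ : FreeGroup α) (hnc : ρ * σ ≠ σ * ρ)
    (A₁ A₂ A₃ : Set (FreeGroup α)) (h1 : A₁.Finite) (h2 : A₂.Finite) (h3 : A₃.Finite)
    (hρ : ρ • A₁ = A₃) (hσ : σ • (A₁ ∪ A₃) = A₁ ∪ A₂) :
    A₁ = ∅ ∧ A₂ = ∅ ∧ A₃ = ∅ := by
  suffices hB : A₁ ∪ A₂ ∪ A₃ = ∅ by simpa only [Set.union_empty_iff, and_assoc] using hB
  have hstep : ∀ x ∈ A₁ ∪ A₂ ∪ A₃, ∃ g ∈ ({ρ⁻¹, σ⁻¹} : Set _), g • x ∈ A₁ ∪ A₂ ∪ A₃ := by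
    intro x hx
    by_cases hx₃ : x ∈ A₃
    · rw [← hρ, Set.mem_smul_set_iff_inv_smul_mem] at hx₃
      exact ⟨ρ⁻¹, .inl rfl, .inl (.inl hx₃)⟩
    · have hx₁₂ : x ∈ σ • (A₁ ∪ A₃) := by rw [hσ]; exact hx.resolve_right hx₃
      rw [Set.mem_smul_set_iff_inv_smul_mem] at hx₁₂
      rcases hx₁₂ with h | h
      exacts [⟨σ⁻¹, .inr rfl, .inl (.inl h)⟩, ⟨σ⁻¹, .inr rfl, .inr h⟩]
  by_contra hne
  obtain ⟨x, -, g, hg, hgx⟩ := ((h1.union h2).union h3).exists_smul_eq_self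
    (Set.nonempty_iff_ne_empty.mpr hne) hstep
  obtain rfl : g = 1 := by simpa using hgx
  exact IsFreeGroup.one_notMem_subsemigroupClosure_pair (Commute.inv_inv_iff.not.mpr hnc) hg

/-- If `ρ` and `σ` do not commute in a free group, then disjoint finite sets with
`ρ • A₁ = A₃` and `σ • (A₁ ∪ A₃) = A₁ ∪ A₂` must all be empty. -/
theorem stmt8 {α : Type*} (ρ σ : FreeGroup α) (hnc : ρ * σ ≠ σ * ρ)
    (A₁ A₂ A₃ : Set (FreeGroup α)) (h1 : A₁.Finite) (h2 : A₂.Finite) (h3 : A₃.Finite)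
    (d12 : Disjoint A₁ A₂) (d13 : Disjoint A₁ A₃) (d23 : Disjoint A₂ A₃)
    (hρ : ρ • A₁ = A₃) (hσ : σ • (A₁ ∪ A₃) = A₁ ∪ A₂) :
    A₁ = ∅ ∧ A₂ = ∅ ∧ A₃ = ∅ :=
  stmt8_general ρ σ hnc A₁ A₂ A₃ h1 h2 h3 hρ hσ
end

section
/- The only finite subsets of a free group satisfying the system of congruences A₁ ≅ A₃, A₁ ∪ A₂ ≅ A₁ ∪ A₃ are those for which some single group element σ satisfies σ • A₃ = A₁ and σ • A₁ = A₂. Precisely: if A₁, A₂, A₃ are pairwise disjoint finite subsets of a free group F and ρ, σ ∈ F satisfy ρ • A₁ = A₃ and σ • (A₁ ∪ A₃) = A₁ ∪ A₂, then σ • A₃ = A₁ and σ • A₁ = A₂. -/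
open Pointwise

/-!
Every `p ∈ A₁` is `σ q` or `σ ρ q` with `q ∈ A₁`; following these steps around a cycle of the
finite set `A₁` gives a nonempty positive word in `σ` and `σ ρ` that is trivial. The subgroup
`⟨σ, ρ⟩` is free (Nielsen–Schreier), and in its abelianization `ℤ^r` the relation makes the images
of `σ` and `ρ` linearly dependent although they generate it, so `r ≤ 1` and `σ`, `ρ` commute.
Then `σ • A₁` misses `A₁` (otherwise `σ ρ a = ρ σ a` lies in `A₃ ∩ (A₁ ∪ A₂)`), so
`A₁ ⊆ σ • A₃`, and equal cardinalities give `σ • A₃ = A₁`, whence `σ • A₁ = A₂`.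
-/

theorem FreeGroup.commute_of_subsingleton {ι : Type*} [Subsingleton ι] (x y : FreeGroup ι) :
    Commute x y := by
  cases isEmpty_or_nonempty ι
  · exact Subsingleton.elim _ _
  · have : Unique ι := uniqueOfSubsingleton (Classical.arbitrary ι)
    exact IsCyclic.commGroup.mul_comm x y

theorem Finsupp.subsingleton_of_forall_single_eq_of_smul_add_smul_eq_zero {ι R : Type*}
    [CommRing R] {s t : ι →₀ R} (hgen : ∀ i, ∃ m n : R, m • s + n • t = single i 1)
    {a b : R} (ha : a ≠ 0) (hrel : a • s + b • t = 0) : Subsingleton ι := by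
  refine ⟨fun i j => by_contra fun hij => ha ?_⟩
  obtain ⟨m₁, n₁, hi⟩ := hgen i
  obtain ⟨m₂, n₂, hj⟩ := hgen j
  have E₁ := DFunLike.congr_fun hi i
  have E₂ := DFunLike.congr_fun hi j
  have E₃ := DFunLike.congr_fun hj i
  have E₄ := DFunLike.congr_fun hj j
  have R₁ := DFunLike.congr_fun hrel i
  have R₂ := DFunLike.congr_fun hrel j
  simp only [coe_add, coe_smul, Pi.add_apply, Pi.smul_apply, smul_eq_mul, single_eq_same,
    single_eq_of_ne hij, single_eq_of_ne (Ne.symm hij), coe_zero, Pi.zero_apply]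
    at E₁ E₂ E₃ E₄ R₁ R₂
  -- `a` is killed by the `i, j` minor of `(s, t)`, which is a unit
  have hdet : (s i * t j - t i * s j) * (m₁ * n₂ - m₂ * n₁) = 1 := by
    linear_combination (m₂ * s j + n₂ * t j) * E₁ + E₄ - (m₁ * s j + n₁ * t j) * E₃
  linear_combination (m₁ * n₂ - m₂ * n₁) * (t j * R₁ - t i * R₂) - a * hdet

theorem IsFreeGroup.commute_of_closure_pair_eq_top {G : Type*} [Group G] [IsFreeGroup G]
    {x y : G} (hgen : Subgroup.closure {x, y} = ⊤) {a b : ℤ} (ha : a ≠ 0)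
    (hrel : Abelianization.of x ^ a * Abelianization.of y ^ b = 1) : Commute x y := by
  let φ : G →* Multiplicative (Generators G →₀ ℤ) :=
    lift fun i => Multiplicative.ofAdd (Finsupp.single i 1)
  have : Subsingleton (Generators G) := by
    refine Finsupp.subsingleton_of_forall_single_eq_of_smul_add_smul_eq_zero
      (s := (φ x).toAdd) (t := (φ y).toAdd) (b := b) (fun i => ?_) ha ?_
    · have hi : φ (of i) ∈ Subgroup.closure {φ x, φ y} := by
        rw [← Set.image_pair, ← MonoidHom.map_closure, hgen]
        exact Subgroup.mem_map_of_mem φ (Subgroup.mem_top _)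
      obtain ⟨m, n, h⟩ := Subgroup.mem_closure_pair.mp hi
      refine ⟨m, n, ?_⟩
      rw [← toAdd_zpow, ← toAdd_zpow, ← toAdd_mul, h, lift_of, toAdd_ofAdd]
    · simpa using congrArg (Multiplicative.toAdd ∘ Abelianization.lift φ) hrel
  simpa using (FreeGroup.commute_of_subsingleton (toFreeGroup G x) (toFreeGroup G y)).map
    (toFreeGroup G).symm

theorem List.prod_map_mul_pow_toNat {M : Type*} [CommMonoid M] (x y : M) (l : List Bool) :
    (l.map fun c => x * y ^ c.toNat).prod = x ^ l.length * y ^ l.count true := by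
  induction l with
  | nil => simp
  | cons c l ih => cases c <;> simp [ih, pow_succ] <;> ac_rfl

theorem IsFreeGroup.commute_of_prod_map_mul_pow_toNat_eq_one {G : Type*} [Group G]
    [IsFreeGroup G] {x y : G} {l : List Bool} (hl : l ≠ [])
    (h : (l.map fun c => x * y ^ c.toNat).prod = 1) :
    Commute x y := by
  let H := Subgroup.closure {x, y}
  let x' : H := ⟨x, Subgroup.subset_closure (by simp)⟩
  let y' : H := ⟨y, Subgroup.subset_closure (by simp)⟩
  have hgen : Subgroup.closure {x', y'} = ⊤ := by
    rw [eq_top_iff, ← Subgroup.closure_closure_coe_preimage]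
    refine Subgroup.closure_mono fun z hz => ?_
    rcases hz with hz | hz
    · exact .inl (Subtype.ext hz)
    · exact .inr (Subtype.ext hz)
  have hH : (l.map fun c => x' * y' ^ c.toNat).prod = 1 := by
    apply H.subtype_injective
    simpa [map_list_prod, Function.comp_def] using h
  have hrel := congrArg Abelianization.of hH
  simp only [map_list_prod, List.map_map, Function.comp_def, map_mul, map_pow, map_one,
    List.prod_map_mul_pow_toNat] at hrel
  have := commute_of_closure_pair_eq_top hgen (a := l.length) (b := l.count true)
    (by simpa using hl) (by exact_mod_cast hrel)
  exact congrArg Subtype.val this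

theorem eq_prod_map_iterate_mul {β M : Type*} [Monoid M] {f : β → β} {u w : β → M}
    (h : ∀ p, u p = w p * u (f p)) (n : ℕ) (p : β) :
    u p = ((List.iterate f p n).map w).prod * u (f^[n] p) := by
  induction n generalizing p with
  | zero => simp
  | succ n ih =>
    rw [List.iterate, List.map_cons, List.prod_cons, Function.iterate_succ_apply, mul_assoc,
      ← ih, ← h]

theorem Finite.exists_prod_map_eq_one_of_forall_eq_mul {β M : Type*} [Finite β] [Nonempty β]
    [RightCancelMonoid M] {f : β → β} {u w : β → M} (h : ∀ p, u p = w p * u (f p)) :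
    ∃ l : List β, l ≠ [] ∧ (l.map w).prod = 1 := by
  obtain ⟨i, j, hij, hfij⟩ :=
    Finite.exists_ne_map_eq_of_infinite fun k => f^[k] (Classical.arbitrary β)
  wlog hlt : i < j generalizing i j
  · exact this j i hij.symm hfij.symm (by omega)
  set p := f^[i] (Classical.arbitrary β)
  have hp : f^[j - i] p = p := by
    rw [← Function.iterate_add_apply, Nat.sub_add_cancel hlt.le, hfij]
  refine ⟨List.iterate f p (j - i), List.iterate_eq_nil.not.mpr (by omega), ?_⟩
  have := eq_prod_map_iterate_mul h (j - i) p
  rwa [hp, right_eq_mul] at this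

theorem IsFreeGroup.commute_of_subset_smul_union {G : Type*} [Group G] [IsFreeGroup G]
    {ρ σ : G} {A : Set G} (hA : A.Finite) (hne : A.Nonempty) (h : A ⊆ σ • (A ∪ ρ • A)) :
    Commute σ ρ := by
  have step : ∀ p : A, ∃ q : A, ∃ c : Bool, (p : G) = σ * ρ ^ c.toNat * q := by
    rintro ⟨p, hp⟩
    obtain ⟨y, hy, rfl⟩ := h hp
    rcases hy with hy | ⟨z, hz, rfl⟩
    · exact ⟨⟨y, hy⟩, false, by simp⟩
    · exact ⟨⟨z, hz⟩, true, by simp [mul_assoc]⟩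
  choose f c hf using step
  have : Finite A := hA.to_subtype
  have : Nonempty A := hne.to_subtype
  obtain ⟨l, hl, hprod⟩ := Finite.exists_prod_map_eq_one_of_forall_eq_mul hf
  exact commute_of_prod_map_mul_pow_toNat_eq_one (l := l.map c) (by simpa using hl)
    (by simpa [List.map_map, Function.comp_def] using hprod)

theorem smul_eq_and_smul_eq_of_commute {G : Type*} [Group G] {ρ σ : G} {A₁ A₂ A₃ : Set G}
    (h1 : A₁.Finite) (d12 : Disjoint A₁ A₂) (d13 : Disjoint A₁ A₃) (d23 : Disjoint A₂ A₃)
    (hρ : ρ • A₁ = A₃) (hσ : σ • (A₁ ∪ A₃) = A₁ ∪ A₂) (hc : Commute σ ρ) :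
    σ • A₃ = A₁ ∧ σ • A₁ = A₂ := by
  subst hρ
  rw [Set.smul_set_union] at hσ
  have hσA₁ : Disjoint (σ • A₁) A₁ := by
    refine Set.disjoint_left.mpr ?_
    rintro _ ⟨a, ha, rfl⟩ hσa
    have hA₃ : σ • ρ • a ∈ ρ • A₁ := by
      rw [smul_smul, hc.eq, mul_smul]
      exact Set.smul_mem_smul_set hσa
    have hA₁₂ : σ • ρ • a ∈ A₁ ∪ A₂ :=
      hσ ▸ Or.inr (Set.smul_mem_smul_set (Set.smul_mem_smul_set ha))
    rcases hA₁₂ with h | h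
    · exact Set.disjoint_left.mp d13 h hA₃
    · exact Set.disjoint_left.mp d23 h hA₃
  have h31 : σ • ρ • A₁ = A₁ := by
    refine (Set.eq_of_subset_of_ncard_le (fun a ha => ?_) ?_ (h1.smul_set.smul_set)).symm
    · have : a ∈ σ • A₁ ∪ σ • ρ • A₁ := hσ ▸ Or.inl ha
      exact this.resolve_left fun h => Set.disjoint_left.mp hσA₁ h ha
    · rw [Set.ncard_smul_set, Set.ncard_smul_set]
  refine ⟨h31, ?_⟩
  rw [h31, Set.union_comm] at hσ
  calc σ • A₁ = (A₁ ∪ σ • A₁) \ A₁ := by rw [Set.union_sdiff_left, hσA₁.sdiff_eq_left]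
    _ = A₂ := by rw [hσ, Set.union_sdiff_left, d12.symm.sdiff_eq_left]

theorem stmt9_general {α : Type*} (ρ σ : FreeGroup α)
    (A₁ A₂ A₃ : Set (FreeGroup α)) (h1 : A₁.Finite)
    (d12 : Disjoint A₁ A₂) (d13 : Disjoint A₁ A₃) (d23 : Disjoint A₂ A₃)
    (hρ : ρ • A₁ = A₃) (hσ : σ • (A₁ ∪ A₃) = A₁ ∪ A₂) :
    σ • A₃ = A₁ ∧ σ • A₁ = A₂ := by
  rcases A₁.eq_empty_or_nonempty with rfl | hne
  · subst hρ
    obtain rfl : A₂ = ∅ := by simpa using hσ.symm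
    simp
  · refine smul_eq_and_smul_eq_of_commute h1 d12 d13 d23 hρ hσ ?_
    refine IsFreeGroup.commute_of_subset_smul_union h1 hne ?_
    rw [hρ, hσ]
    exact Set.subset_union_left

/-- In a free group, disjoint finite sets with `ρ • A₁ = A₃` and
`σ • (A₁ ∪ A₃) = A₁ ∪ A₂` satisfy `σ • A₃ = A₁` and `σ • A₁ = A₂`. -/
theorem stmt9 {α : Type*} (ρ σ : FreeGroup α)
    (A₁ A₂ A₃ : Set (FreeGroup α)) (h1 : A₁.Finite) (h2 : A₂.Finite) (h3 : A₃.Finite)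
    (d12 : Disjoint A₁ A₂) (d13 : Disjoint A₁ A₃) (d23 : Disjoint A₂ A₃)
    (hρ : ρ • A₁ = A₃) (hσ : σ • (A₁ ∪ A₃) = A₁ ∪ A₂) :
    σ • A₃ = A₁ ∧ σ • A₁ = A₂ :=
  stmt9_general ρ σ A₁ A₂ A₃ h1 d12 d13 d23 hρ hσ
end

section
/- Let F be a free group on two or more generators and let σ, τ be two of its free generators. Let w be an element of F whose reduced word in σ, τ consists of a (possibly empty) block of inverse generators (σ⁻¹ and τ⁻¹) followed by a block of generators (σ and τ), with strictly more letters in the positive block than the negative block, and whose rightmost letter is σ. Let w' be an element of the same form except that its rightmost letter is τ. Then w and w' do not commute. -/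
/-!
In a word `n⁻¹ p` with `|n| < |p|` every nonempty suffix has positive exponent sum, and this
survives concatenation and the cancellation of an adjacent pair `x x⁻¹`. Cancelling the last
letter would need a terminal pair `x x⁻¹`, a suffix of exponent sum `0`; so free reduction of
such words keeps the last letter. The reduced word of `w * w'`
therefore ends in `τ`, that of `w' * w` in `σ`.
-/

namespace FreeGroup

variable {α : Type*}

def expSum (L : List (α × Bool)) : ℤ :=
  (L.map fun x => if x.2 then 1 else -1).sum

@[simp]
theorem expSum_nil : expSum ([] : List (α × Bool)) = 0 := rfl

@[simp]
theorem expSum_cons (x : α × Bool) (L : List (α × Bool)) :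
    expSum (x :: L) = (if x.2 then 1 else -1) + expSum L := by
  simp [expSum]

@[simp]
theorem expSum_append (L₁ L₂ : List (α × Bool)) : expSum (L₁ ++ L₂) = expSum L₁ + expSum L₂ := by
  simp [expSum]

theorem neg_length_le_expSum (L : List (α × Bool)) : -(L.length : ℤ) ≤ expSum L := by
  induction L with
  | nil => simp
  | cons x L ih =>
    rw [expSum_cons, List.length_cons]
    split_ifs <;> push_cast <;> omega

theorem expSum_map_true (L : List α) : expSum (L.map (·, true)) = L.length := by
  induction L with
  | nil => simp
  | cons x L ih => simp [ih, add_comm]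

def SuffixesPositive (L : List (α × Bool)) : Prop :=
  ∀ A B, L = A ++ B → B ≠ [] → 0 < expSum B

namespace SuffixesPositive

variable {L L₁ L₂ : List (α × Bool)}

theorem expSum_nonneg (h : SuffixesPositive L) : 0 ≤ expSum L := by
  rcases eq_or_ne L [] with rfl | hL
  · simp
  · exact (h [] L rfl hL).le

theorem append (h₁ : SuffixesPositive L₁) (h₂ : SuffixesPositive L₂) :
    SuffixesPositive (L₁ ++ L₂) := by
  intro A B hAB hB
  rcases List.append_eq_append_iff.1 hAB.symm with ⟨C, rfl, rfl⟩ | ⟨C, rfl, rfl⟩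
  · rcases eq_or_ne C [] with rfl | hC
    · exact h₂ [] _ rfl (by simpa using hB)
    · rw [expSum_append]
      linarith [h₁ A C rfl hC, h₂.expSum_nonneg]
  · exact h₂ C B rfl hB

theorem red_step (h : SuffixesPositive L₁) (hstep : Red.Step L₁ L₂) :
    SuffixesPositive L₂ ∧ L₂.getLast? = L₁.getLast? := by
  obtain @⟨A, C, x, b⟩ := hstep
  have hC : C ≠ [] := by
    rintro rfl
    have := h A _ rfl (List.cons_ne_nil _ _)
    cases b <;> simp at this
  refine ⟨fun A' B hAB hB => ?_, ?_⟩
  · rcases List.append_eq_append_iff.1 hAB.symm with ⟨D, rfl, rfl⟩ | ⟨D, rfl, rfl⟩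
    · have := h A' (D ++ (x, b) :: (x, !b) :: C) (by simp) (by simp)
      cases b <;> simpa using this
    · exact h (A ++ (x, b) :: (x, !b) :: D) B (by simp) hB
  · have hsplit : (x, b) :: (x, !b) :: C = [(x, b), (x, !b)] ++ C := rfl
    rw [hsplit, ← List.append_assoc, List.getLast?_append_of_ne_nil _ hC,
      List.getLast?_append_of_ne_nil _ hC]

theorem getLast?_of_red (h : SuffixesPositive L₁) (hred : Red L₁ L₂) :
    L₂.getLast? = L₁.getLast? := by
  suffices SuffixesPositive L₂ ∧ L₂.getLast? = L₁.getLast? from this.2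
  induction hred with
  | refl => exact ⟨h, rfl⟩
  | tail _ hstep ih =>
    obtain ⟨h', hlast⟩ := ih.1.red_step hstep
    exact ⟨h', hlast.trans ih.2⟩

theorem getLast?_toWord_mk [DecidableEq α] (h : SuffixesPositive L) :
    (mk L).toWord.getLast? = L.getLast? := by
  rw [toWord_mk]
  exact h.getLast?_of_red reduce.red

end SuffixesPositive

theorem prod_map_inv_of_mul_prod_map_of (m n : List α) :
    (m.map fun x => (of x)⁻¹).prod * (n.map of).prod = mk (m.map (·, false) ++ n.map (·, true)) := by
  rw [← lift_of_apply (mk _), lift_mk]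
  simp [Function.comp_def]

theorem suffixesPositive_map_false_append_map_true {m n : List α} (h : m.length < n.length) :
    SuffixesPositive (m.map (·, false) ++ n.map (·, true)) := by
  intro A B hAB hB
  rcases List.append_eq_append_iff.1 hAB.symm with ⟨C, hm, rfl⟩ | ⟨C, rfl, hn⟩
  · have hC : C.length ≤ m.length := by
      have := congrArg List.length hm
      simp only [List.length_map, List.length_append] at this
      omega
    rw [expSum_append, expSum_map_true]
    linarith [neg_length_le_expSum C]
  · obtain ⟨n₁, n₂, -, -, rfl⟩ := List.map_eq_append_iff.1 hn
    rw [expSum_map_true]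
    simpa [List.length_pos_iff] using hB

end FreeGroup

theorem stmt17_general {α : Type*} (a b : α) (hab : a ≠ b)
    (nw pw nw' pw' : List α)
    (hlen : nw.length < pw.length) (hlen' : nw'.length < pw'.length)
    (hlast : pw.getLast? = some a) (hlast' : pw'.getLast? = some b)
    (w w' : FreeGroup α)
    (hw : w = (nw.map (fun x => (FreeGroup.of x)⁻¹)).prod * (pw.map FreeGroup.of).prod)
    (hw' : w' = (nw'.map (fun x => (FreeGroup.of x)⁻¹)).prod * (pw'.map FreeGroup.of).prod) :
    w * w' ≠ w' * w := by
  classical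
  rw [FreeGroup.prod_map_inv_of_mul_prod_map_of] at hw hw'
  subst hw hw'
  have hpos := FreeGroup.suffixesPositive_map_false_append_map_true hlen
  have hpos' := FreeGroup.suffixesPositive_map_false_append_map_true hlen'
  have hlast_ww' := (hpos.append hpos').getLast?_toWord_mk
  have hlast_w'w := (hpos'.append hpos).getLast?_toWord_mk
  rw [← FreeGroup.mul_mk] at hlast_ww' hlast_w'w
  intro hcomm
  rw [hcomm, hlast_w'w] at hlast_ww'
  exact hab (by simpa [hlast, hlast'] using hlast_ww')

/-- Let `w` be a word in the free generators `σ = of a`, `τ = of b` consisting of a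
block of inverse generators followed by a strictly longer block of generators whose
rightmost letter is `σ`, and let `w'` have the same form with rightmost letter `τ`.
Then `w` and `w'` do not commute. -/
theorem stmt17 {α : Type*} (a b : α) (hab : a ≠ b)
    (nw pw nw' pw' : List α)
    (hnw : ∀ x ∈ nw, x = a ∨ x = b) (hpw : ∀ x ∈ pw, x = a ∨ x = b)
    (hnw' : ∀ x ∈ nw', x = a ∨ x = b) (hpw' : ∀ x ∈ pw', x = a ∨ x = b)
    (hlen : nw.length < pw.length) (hlen' : nw'.length < pw'.length)
    (hlast : pw.getLast? = some a) (hlast' : pw'.getLast? = some b)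
    (w w' : FreeGroup α)
    (hw : w = (nw.map (fun x => (FreeGroup.of x)⁻¹)).prod * (pw.map FreeGroup.of).prod)
    (hw' : w' = (nw'.map (fun x => (FreeGroup.of x)⁻¹)).prod * (pw'.map FreeGroup.of).prod) :
    w * w' ≠ w' * w :=
  stmt17_general a b hab nw pw nw' pw' hlen hlen' hlast hlast' w w' hw hw'
end
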